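/- arXiv:1405.4726 — 2 statements merged into one kernel-verified Lean document; each statement's English description precedes it below -/
import Mathlib

section
/- At z = q⁻¹ the nineteen-vertex R-matrix degenerates to a rank-one operator: R(q⁻¹) = [q][q²] · |s⟩⟨s|, where |s⟩ = |⇑⇓⟩ + |⇓⇑⟩ − |00⟩ ∈ ℂ³⊗ℂ³; that is, R(q⁻¹)v = [q][q²]·⟨s, v⟩·s for all v, where ⟨·,·⟩ is the bilinear form for which the canonical basis of ℂ³⊗ℂ³ is orthonormal. -/
open Matrix BigOperators Finset

noncomputable section

/-- `[z] = z - z⁻¹`. -/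
def br (z : ℂ) : ℂ := z - z⁻¹

/-- Nineteen-vertex R-matrix on ℂ³⊗ℂ³ (basis 0=⇑, 1=0, 2=⇓). -/
def R19 (q z : ℂ) : Matrix (Fin 3 × Fin 3) (Fin 3 × Fin 3) ℂ :=
  Matrix.of fun p p' =>
    if p = (0,0) ∧ p' = (0,0) then br (q*z) * br (q^2*z)
    else if p = (2,2) ∧ p' = (2,2) then br (q*z) * br (q^2*z)
    else if p = (0,2) ∧ p' = (0,2) then br (q⁻¹*z) * br z
    else if p = (2,0) ∧ p' = (2,0) then br (q⁻¹*z) * br z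
    else if p = (0,2) ∧ p' = (2,0) then br q * br (q^2)
    else if p = (2,0) ∧ p' = (0,2) then br q * br (q^2)
    else if p = (0,1) ∧ p' = (0,1) then br z * br (q*z)
    else if p = (1,0) ∧ p' = (1,0) then br z * br (q*z)
    else if p = (1,2) ∧ p' = (1,2) then br z * br (q*z)
    else if p = (2,1) ∧ p' = (2,1) then br z * br (q*z)
    else if p = (0,1) ∧ p' = (1,0) then br (q^2) * br (q*z)
    else if p = (1,0) ∧ p' = (0,1) then br (q^2) * br (q*z)
    else if p = (1,2) ∧ p' = (2,1) then br (q^2) * br (q*z)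
    else if p = (2,1) ∧ p' = (1,2) then br (q^2) * br (q*z)
    else if p = (1,1) ∧ p' = (0,2) then br (q^2) * br z
    else if p = (1,1) ∧ p' = (2,0) then br (q^2) * br z
    else if p = (0,2) ∧ p' = (1,1) then br (q^2) * br z
    else if p = (2,0) ∧ p' = (1,1) then br (q^2) * br z
    else if p = (1,1) ∧ p' = (1,1) then br z * br (q*z) + br q * br (q^2)
    else 0

/-- The vector `|s⟩ = |⇑⇓⟩ + |⇓⇑⟩ − |00⟩` in ℂ³⊗ℂ³. -/
def svec : Fin 3 × Fin 3 → ℂ := fun p =>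
  if p = (0,2) then 1 else if p = (2,0) then 1 else if p = (1,1) then -1 else 0

theorem br_inv (z : ℂ) : br z⁻¹ = -br z := by
  rw [br, br, inv_inv, neg_sub]

theorem br_mul_inv_self (z : ℂ) : br (z * z⁻¹) = 0 := by
  rw [br, mul_inv, inv_inv, mul_comm, sub_self]

theorem stmt7_general (q : ℂ) :
    R19 q q⁻¹ = (br q * br (q^2)) • Matrix.vecMulVec svec svec := by
  have h_one : br (q * q⁻¹) = 0 := br_mul_inv_self q
  have h_q : br (q ^ 2 * q⁻¹) = br q := by rw [sq, mul_self_mul_inv]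
  have h_inv_sq : br (q⁻¹ * q⁻¹) = -br (q ^ 2) := by rw [← mul_inv, ← sq, br_inv]
  ext ⟨a, b⟩ ⟨c, d⟩
  fin_cases a <;> fin_cases b <;> fin_cases c <;> fin_cases d <;>
    simp only [R19, svec, vecMulVec, of_apply, Matrix.smul_apply, smul_eq_mul, Prod.mk.injEq,
      Fin.isValue, Fin.zero_eta, Fin.mk_one, Fin.reduceFinMk, Fin.reduceEq, zero_ne_one,
      one_ne_zero, and_self, and_true, and_false, ↓reduceIte, h_one, h_q, h_inv_sq, br_inv,
      mul_neg, neg_mul, neg_neg, mul_one, mul_zero, zero_mul, zero_add] <;> ring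

/-- At `z = q⁻¹` the nineteen-vertex R-matrix degenerates to the rank-one operator
`[q][q²] |s⟩⟨s|` with `|s⟩ = |⇑⇓⟩ + |⇓⇑⟩ − |00⟩`. -/
theorem stmt7 (q : ℂ) (hq : q ≠ 0) :
    R19 q q⁻¹ = (br q * br (q^2)) • Matrix.vecMulVec svec svec :=
  stmt7_general q

end
end

section
/- The nineteen-vertex R-matrix solves the Yang–Baxter equation: for all nonzero complex z and w, R₁₂(z/w) R₁₃(z) R₂₃(w) = R₂₃(w) R₁₃(z) R₁₂(z/w) as operators on ℂ³⊗ℂ³⊗ℂ³, where the subscripts indicate the pair of tensor factors on which the operator acts (identity on the remaining factor). -/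
open Matrix BigOperators Finset

noncomputable section

/-- Embedding of an operator on ℂ³⊗ℂ³ into factors 1,2 of ℂ³⊗ℂ³⊗ℂ³. -/
def E12 (M : Matrix (Fin 3 × Fin 3) (Fin 3 × Fin 3) ℂ) :
    Matrix (Fin 3 × Fin 3 × Fin 3) (Fin 3 × Fin 3 × Fin 3) ℂ :=
  Matrix.of fun p p' => M (p.1, p.2.1) (p'.1, p'.2.1) * if p.2.2 = p'.2.2 then 1 else 0

/-- Embedding into factors 1,3. -/
def E13 (M : Matrix (Fin 3 × Fin 3) (Fin 3 × Fin 3) ℂ) :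
    Matrix (Fin 3 × Fin 3 × Fin 3) (Fin 3 × Fin 3 × Fin 3) ℂ :=
  Matrix.of fun p p' => M (p.1, p.2.2) (p'.1, p'.2.2) * if p.2.1 = p'.2.1 then 1 else 0

/-- Embedding into factors 2,3. -/
def E23 (M : Matrix (Fin 3 × Fin 3) (Fin 3 × Fin 3) ℂ) :
    Matrix (Fin 3 × Fin 3 × Fin 3) (Fin 3 × Fin 3 × Fin 3) ℂ :=
  Matrix.of fun p p' => M (p.2.1, p.2.2) (p'.2.1, p'.2.2) * if p.1 = p'.1 then 1 else 0

def Q19 (q z w : ℂ) : Matrix (Fin 3 × Fin 3) (Fin 3 × Fin 3) ℂ :=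
  Matrix.of fun p p' =>
    if p = (0, 0) ∧ p' = (0, 0) then (q^2*z^2-w^2)*(q^4*z^2-w^2)
    else if p = (2, 2) ∧ p' = (2, 2) then (q^2*z^2-w^2)*(q^4*z^2-w^2)
    else if p = (0, 2) ∧ p' = (0, 2) then q^2*(z^2-q^2*w^2)*(z^2-w^2)
    else if p = (2, 0) ∧ p' = (2, 0) then q^2*(z^2-q^2*w^2)*(z^2-w^2)
    else if p = (0, 2) ∧ p' = (2, 0) then (q^2-1)*(q^4-1)*z^2*w^2
    else if p = (2, 0) ∧ p' = (0, 2) then (q^2-1)*(q^4-1)*z^2*w^2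
    else if p = (0, 1) ∧ p' = (0, 1) then q^2*(z^2-w^2)*(q^2*z^2-w^2)
    else if p = (1, 0) ∧ p' = (1, 0) then q^2*(z^2-w^2)*(q^2*z^2-w^2)
    else if p = (1, 2) ∧ p' = (1, 2) then q^2*(z^2-w^2)*(q^2*z^2-w^2)
    else if p = (2, 1) ∧ p' = (2, 1) then q^2*(z^2-w^2)*(q^2*z^2-w^2)
    else if p = (0, 1) ∧ p' = (1, 0) then (q^4-1)*(q^2*z^2-w^2)*z*w
    else if p = (1, 0) ∧ p' = (0, 1) then (q^4-1)*(q^2*z^2-w^2)*z*w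
    else if p = (1, 2) ∧ p' = (2, 1) then (q^4-1)*(q^2*z^2-w^2)*z*w
    else if p = (2, 1) ∧ p' = (1, 2) then (q^4-1)*(q^2*z^2-w^2)*z*w
    else if p = (1, 1) ∧ p' = (0, 2) then q*(q^4-1)*(z^2-w^2)*z*w
    else if p = (1, 1) ∧ p' = (2, 0) then q*(q^4-1)*(z^2-w^2)*z*w
    else if p = (0, 2) ∧ p' = (1, 1) then q*(q^4-1)*(z^2-w^2)*z*w
    else if p = (2, 0) ∧ p' = (1, 1) then q*(q^4-1)*(z^2-w^2)*z*w
    else if p = (1, 1) ∧ p' = (1, 1) then q^2*(z^2-w^2)*(q^2*z^2-w^2) + (q^2-1)*(q^4-1)*z^2*w^2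
    else 0

lemma Q19e_0000 (q z w : ℂ) : Q19 q z w (0,0) (0,0) = (q^2*z^2-w^2)*(q^4*z^2-w^2) := rfl
lemma Q19e_0001 (q z w : ℂ) : Q19 q z w (0,0) (0,1) = 0 := rfl
lemma Q19e_0002 (q z w : ℂ) : Q19 q z w (0,0) (0,2) = 0 := rfl
lemma Q19e_0010 (q z w : ℂ) : Q19 q z w (0,0) (1,0) = 0 := rfl
lemma Q19e_0011 (q z w : ℂ) : Q19 q z w (0,0) (1,1) = 0 := rfl
lemma Q19e_0012 (q z w : ℂ) : Q19 q z w (0,0) (1,2) = 0 := rfl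
lemma Q19e_0020 (q z w : ℂ) : Q19 q z w (0,0) (2,0) = 0 := rfl
lemma Q19e_0021 (q z w : ℂ) : Q19 q z w (0,0) (2,1) = 0 := rfl
lemma Q19e_0022 (q z w : ℂ) : Q19 q z w (0,0) (2,2) = 0 := rfl
lemma Q19e_0100 (q z w : ℂ) : Q19 q z w (0,1) (0,0) = 0 := rfl
lemma Q19e_0101 (q z w : ℂ) : Q19 q z w (0,1) (0,1) = q^2*(z^2-w^2)*(q^2*z^2-w^2) := rfl
lemma Q19e_0102 (q z w : ℂ) : Q19 q z w (0,1) (0,2) = 0 := rfl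
lemma Q19e_0110 (q z w : ℂ) : Q19 q z w (0,1) (1,0) = (q^4-1)*(q^2*z^2-w^2)*z*w := rfl
lemma Q19e_0111 (q z w : ℂ) : Q19 q z w (0,1) (1,1) = 0 := rfl
lemma Q19e_0112 (q z w : ℂ) : Q19 q z w (0,1) (1,2) = 0 := rfl
lemma Q19e_0120 (q z w : ℂ) : Q19 q z w (0,1) (2,0) = 0 := rfl
lemma Q19e_0121 (q z w : ℂ) : Q19 q z w (0,1) (2,1) = 0 := rfl
lemma Q19e_0122 (q z w : ℂ) : Q19 q z w (0,1) (2,2) = 0 := rfl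
lemma Q19e_0200 (q z w : ℂ) : Q19 q z w (0,2) (0,0) = 0 := rfl
lemma Q19e_0201 (q z w : ℂ) : Q19 q z w (0,2) (0,1) = 0 := rfl
lemma Q19e_0202 (q z w : ℂ) : Q19 q z w (0,2) (0,2) = q^2*(z^2-q^2*w^2)*(z^2-w^2) := rfl
lemma Q19e_0210 (q z w : ℂ) : Q19 q z w (0,2) (1,0) = 0 := rfl
lemma Q19e_0211 (q z w : ℂ) : Q19 q z w (0,2) (1,1) = q*(q^4-1)*(z^2-w^2)*z*w := rfl
lemma Q19e_0212 (q z w : ℂ) : Q19 q z w (0,2) (1,2) = 0 := rfl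
lemma Q19e_0220 (q z w : ℂ) : Q19 q z w (0,2) (2,0) = (q^2-1)*(q^4-1)*z^2*w^2 := rfl
lemma Q19e_0221 (q z w : ℂ) : Q19 q z w (0,2) (2,1) = 0 := rfl
lemma Q19e_0222 (q z w : ℂ) : Q19 q z w (0,2) (2,2) = 0 := rfl
lemma Q19e_1000 (q z w : ℂ) : Q19 q z w (1,0) (0,0) = 0 := rfl
lemma Q19e_1001 (q z w : ℂ) : Q19 q z w (1,0) (0,1) = (q^4-1)*(q^2*z^2-w^2)*z*w := rfl
lemma Q19e_1002 (q z w : ℂ) : Q19 q z w (1,0) (0,2) = 0 := rfl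
lemma Q19e_1010 (q z w : ℂ) : Q19 q z w (1,0) (1,0) = q^2*(z^2-w^2)*(q^2*z^2-w^2) := rfl
lemma Q19e_1011 (q z w : ℂ) : Q19 q z w (1,0) (1,1) = 0 := rfl
lemma Q19e_1012 (q z w : ℂ) : Q19 q z w (1,0) (1,2) = 0 := rfl
lemma Q19e_1020 (q z w : ℂ) : Q19 q z w (1,0) (2,0) = 0 := rfl
lemma Q19e_1021 (q z w : ℂ) : Q19 q z w (1,0) (2,1) = 0 := rfl
lemma Q19e_1022 (q z w : ℂ) : Q19 q z w (1,0) (2,2) = 0 := rfl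
lemma Q19e_1100 (q z w : ℂ) : Q19 q z w (1,1) (0,0) = 0 := rfl
lemma Q19e_1101 (q z w : ℂ) : Q19 q z w (1,1) (0,1) = 0 := rfl
lemma Q19e_1102 (q z w : ℂ) : Q19 q z w (1,1) (0,2) = q*(q^4-1)*(z^2-w^2)*z*w := rfl
lemma Q19e_1110 (q z w : ℂ) : Q19 q z w (1,1) (1,0) = 0 := rfl
lemma Q19e_1111 (q z w : ℂ) : Q19 q z w (1,1) (1,1) = q^2*(z^2-w^2)*(q^2*z^2-w^2) + (q^2-1)*(q^4-1)*z^2*w^2 := rfl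
lemma Q19e_1112 (q z w : ℂ) : Q19 q z w (1,1) (1,2) = 0 := rfl
lemma Q19e_1120 (q z w : ℂ) : Q19 q z w (1,1) (2,0) = q*(q^4-1)*(z^2-w^2)*z*w := rfl
lemma Q19e_1121 (q z w : ℂ) : Q19 q z w (1,1) (2,1) = 0 := rfl
lemma Q19e_1122 (q z w : ℂ) : Q19 q z w (1,1) (2,2) = 0 := rfl
lemma Q19e_1200 (q z w : ℂ) : Q19 q z w (1,2) (0,0) = 0 := rfl
lemma Q19e_1201 (q z w : ℂ) : Q19 q z w (1,2) (0,1) = 0 := rfl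
lemma Q19e_1202 (q z w : ℂ) : Q19 q z w (1,2) (0,2) = 0 := rfl
lemma Q19e_1210 (q z w : ℂ) : Q19 q z w (1,2) (1,0) = 0 := rfl
lemma Q19e_1211 (q z w : ℂ) : Q19 q z w (1,2) (1,1) = 0 := rfl
lemma Q19e_1212 (q z w : ℂ) : Q19 q z w (1,2) (1,2) = q^2*(z^2-w^2)*(q^2*z^2-w^2) := rfl
lemma Q19e_1220 (q z w : ℂ) : Q19 q z w (1,2) (2,0) = 0 := rfl
lemma Q19e_1221 (q z w : ℂ) : Q19 q z w (1,2) (2,1) = (q^4-1)*(q^2*z^2-w^2)*z*w := rfl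
lemma Q19e_1222 (q z w : ℂ) : Q19 q z w (1,2) (2,2) = 0 := rfl
lemma Q19e_2000 (q z w : ℂ) : Q19 q z w (2,0) (0,0) = 0 := rfl
lemma Q19e_2001 (q z w : ℂ) : Q19 q z w (2,0) (0,1) = 0 := rfl
lemma Q19e_2002 (q z w : ℂ) : Q19 q z w (2,0) (0,2) = (q^2-1)*(q^4-1)*z^2*w^2 := rfl
lemma Q19e_2010 (q z w : ℂ) : Q19 q z w (2,0) (1,0) = 0 := rfl
lemma Q19e_2011 (q z w : ℂ) : Q19 q z w (2,0) (1,1) = q*(q^4-1)*(z^2-w^2)*z*w := rfl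
lemma Q19e_2012 (q z w : ℂ) : Q19 q z w (2,0) (1,2) = 0 := rfl
lemma Q19e_2020 (q z w : ℂ) : Q19 q z w (2,0) (2,0) = q^2*(z^2-q^2*w^2)*(z^2-w^2) := rfl
lemma Q19e_2021 (q z w : ℂ) : Q19 q z w (2,0) (2,1) = 0 := rfl
lemma Q19e_2022 (q z w : ℂ) : Q19 q z w (2,0) (2,2) = 0 := rfl
lemma Q19e_2100 (q z w : ℂ) : Q19 q z w (2,1) (0,0) = 0 := rfl
lemma Q19e_2101 (q z w : ℂ) : Q19 q z w (2,1) (0,1) = 0 := rfl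
lemma Q19e_2102 (q z w : ℂ) : Q19 q z w (2,1) (0,2) = 0 := rfl
lemma Q19e_2110 (q z w : ℂ) : Q19 q z w (2,1) (1,0) = 0 := rfl
lemma Q19e_2111 (q z w : ℂ) : Q19 q z w (2,1) (1,1) = 0 := rfl
lemma Q19e_2112 (q z w : ℂ) : Q19 q z w (2,1) (1,2) = (q^4-1)*(q^2*z^2-w^2)*z*w := rfl
lemma Q19e_2120 (q z w : ℂ) : Q19 q z w (2,1) (2,0) = 0 := rfl
lemma Q19e_2121 (q z w : ℂ) : Q19 q z w (2,1) (2,1) = q^2*(z^2-w^2)*(q^2*z^2-w^2) := rfl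
lemma Q19e_2122 (q z w : ℂ) : Q19 q z w (2,1) (2,2) = 0 := rfl
lemma Q19e_2200 (q z w : ℂ) : Q19 q z w (2,2) (0,0) = 0 := rfl
lemma Q19e_2201 (q z w : ℂ) : Q19 q z w (2,2) (0,1) = 0 := rfl
lemma Q19e_2202 (q z w : ℂ) : Q19 q z w (2,2) (0,2) = 0 := rfl
lemma Q19e_2210 (q z w : ℂ) : Q19 q z w (2,2) (1,0) = 0 := rfl
lemma Q19e_2211 (q z w : ℂ) : Q19 q z w (2,2) (1,1) = 0 := rfl
lemma Q19e_2212 (q z w : ℂ) : Q19 q z w (2,2) (1,2) = 0 := rfl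
lemma Q19e_2220 (q z w : ℂ) : Q19 q z w (2,2) (2,0) = 0 := rfl
lemma Q19e_2221 (q z w : ℂ) : Q19 q z w (2,2) (2,1) = 0 := rfl
lemma Q19e_2222 (q z w : ℂ) : Q19 q z w (2,2) (2,2) = (q^2*z^2-w^2)*(q^4*z^2-w^2) := rfl

set_option maxHeartbeats 1000000 in
lemma scale19 (q z w : ℂ) (hq : q ≠ 0) (hz : z ≠ 0) (hw : w ≠ 0) :
    Q19 q z w = (q^3*z^2*w^2) • R19 q (z/w) := by
  ext p p'
  simp only [R19, Q19, Matrix.smul_apply, Matrix.of_apply, smul_eq_mul, mul_ite, mul_add, mul_zero]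
  repeat' apply if_congr Iff.rfl
  all_goals simp only [br, mul_inv, inv_div, div_mul_eq_mul_div, mul_div_assoc]
  all_goals field_simp
  all_goals try rw [eq_div_iff (by simp [hq, hz, hw])]
  all_goals try ring

lemma L_entry (A B C : Matrix (Fin 3 × Fin 3) (Fin 3 × Fin 3) ℂ) (a b c d e f : Fin 3) :
    (E12 A * E13 B * E23 C) (a,b,c) (d,e,f)
      = ∑ i : Fin 3, ∑ j : Fin 3, ∑ n : Fin 3, A (a,b) (i,j) * B (i,c) (d,n) * C (j,n) (e,f) := by
  simp [Matrix.mul_apply, E12, E13, E23, Fintype.sum_prod_type, mul_ite, ite_mul,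
    mul_zero, zero_mul, mul_one, one_mul, Finset.sum_ite_eq, Finset.sum_ite_eq',
    Finset.mul_sum, Finset.sum_mul, mul_assoc]
  simp only [Fin.sum_univ_three]
  ring

lemma R_entry (A B C : Matrix (Fin 3 × Fin 3) (Fin 3 × Fin 3) ℂ) (a b c d e f : Fin 3) :
    (E23 C * E13 B * E12 A) (a,b,c) (d,e,f)
      = ∑ j : Fin 3, ∑ k : Fin 3, ∑ l : Fin 3, C (b,c) (j,k) * B (a,k) (l,f) * A (l,j) (d,e) := by
  simp [Matrix.mul_apply, E12, E13, E23, Fintype.sum_prod_type, mul_ite, ite_mul,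
    mul_zero, zero_mul, mul_one, one_mul, Finset.sum_ite_eq, Finset.sum_ite_eq',
    Finset.mul_sum, Finset.sum_mul, mul_assoc]
  simp only [Fin.sum_univ_three]
  ring

lemma fin3cases (x : Fin 3) : x = 0 ∨ x = 1 ∨ x = 2 := by omega

set_option maxHeartbeats 4000000 in
lemma polyYBE (q z w : ℂ) :
    E12 (Q19 q z w) * E13 (Q19 q z 1) * E23 (Q19 q w 1) =
      E23 (Q19 q w 1) * E13 (Q19 q z 1) * E12 (Q19 q z w) := by
  ext ⟨a,b,c⟩ ⟨d,e,f⟩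
  rw [L_entry, R_entry]
  rcases fin3cases a with rfl|rfl|rfl <;> rcases fin3cases b with rfl|rfl|rfl <;>
    rcases fin3cases c with rfl|rfl|rfl <;> rcases fin3cases d with rfl|rfl|rfl <;>
    rcases fin3cases e with rfl|rfl|rfl <;> rcases fin3cases f with rfl|rfl|rfl <;>
    simp only [Fin.sum_univ_three, zero_mul, mul_zero, add_zero, zero_add, Q19e_0000, Q19e_0001, Q19e_0002, Q19e_0010, Q19e_0011, Q19e_0012, Q19e_0020, Q19e_0021, Q19e_0022, Q19e_0100, Q19e_0101, Q19e_0102, Q19e_0110, Q19e_0111, Q19e_0112, Q19e_0120, Q19e_0121, Q19e_0122, Q19e_0200, Q19e_0201, Q19e_0202, Q19e_0210, Q19e_0211, Q19e_0212, Q19e_0220, Q19e_0221, Q19e_0222, Q19e_1000, Q19e_1001, Q19e_1002, Q19e_1010, Q19e_1011, Q19e_1012, Q19e_1020, Q19e_1021, Q19e_1022, Q19e_1100, Q19e_1101, Q19e_1102, Q19e_1110, Q19e_1111, Q19e_1112, Q19e_1120, Q19e_1121, Q19e_1122, Q19e_1200, Q19e_1201, Q19e_1202, Q19e_1210, Q19e_1211,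 Q19e_1212, Q19e_1220, Q19e_1221, Q19e_1222, Q19e_2000, Q19e_2001, Q19e_2002, Q19e_2010, Q19e_2011, Q19e_2012, Q19e_2020, Q19e_2021, Q19e_2022, Q19e_2100, Q19e_2101, Q19e_2102, Q19e_2110, Q19e_2111, Q19e_2112, Q19e_2120, Q19e_2121, Q19e_2122, Q19e_2200, Q19e_2201, Q19e_2202, Q19e_2210, Q19e_2211, Q19e_2212, Q19e_2220, Q19e_2221, Q19e_2222]
  all_goals ring

lemma E12_smul (c : ℂ) (M : Matrix (Fin 3 × Fin 3) (Fin 3 × Fin 3) ℂ) :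
    E12 (c • M) = c • E12 M := by
  ext p p'; simp [E12, mul_assoc]

lemma E13_smul (c : ℂ) (M : Matrix (Fin 3 × Fin 3) (Fin 3 × Fin 3) ℂ) :
    E13 (c • M) = c • E13 M := by
  ext p p'; simp [E13, mul_assoc]

lemma E23_smul (c : ℂ) (M : Matrix (Fin 3 × Fin 3) (Fin 3 × Fin 3) ℂ) :
    E23 (c • M) = c • E23 M := by
  ext p p'; simp [E23, mul_assoc]

/-- Yang–Baxter equation for the nineteen-vertex R-matrix:
`R₁₂(z/w) R₁₃(z) R₂₃(w) = R₂₃(w) R₁₃(z) R₁₂(z/w)`. -/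
theorem stmt8 (q z w : ℂ) (hq : q ≠ 0) (hz : z ≠ 0) (hw : w ≠ 0) :
    E12 (R19 q (z/w)) * E13 (R19 q z) * E23 (R19 q w) =
      E23 (R19 q w) * E13 (R19 q z) * E12 (R19 q (z/w)) := by
  have h1 : Q19 q z w = (q^3*z^2*w^2) • R19 q (z/w) := scale19 q z w hq hz hw
  have h2 : Q19 q z 1 = (q^3*z^2) • R19 q z := by
    simpa using scale19 q z 1 hq hz one_ne_zero
  have h3 : Q19 q w 1 = (q^3*w^2) • R19 q w := by
    simpa using scale19 q w 1 hq hw one_ne_zero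
  have key := polyYBE q z w
  rw [h1, h2, h3, E12_smul, E13_smul, E23_smul] at key
  simp only [smul_mul_assoc, mul_smul_comm, smul_smul] at key
  have hc : (q^3*z^2*w^2) * ((q^3*z^2) * (q^3*w^2)) ≠ 0 := by
    simp [hq, hz, hw, pow_ne_zero]
  apply smul_right_injective _ hc
  convert key using 2 <;> ring

end
end
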